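/- With g = e ⊕ g₀ a product metric on M ⊆ ℝ × M₀ and v a smooth complex-valued function, the pointwise divergence identity holds: 4τ Re((Δ_g + τ²)v · ∂₁\bar v) = div_g[4τ Re(∂₁\bar v · ∇_g v) − 2τ(∇_g φ)|∇_g v|²_g + 2τ³(∇_g φ)|v|²], where φ(x) = x₁. -/

import Mathlib

/- Statement 3: pointwise divergence identity for the product metric g = e ⊕ g₀, φ(x) = x₁:
   4τ Re((Δ_g + τ²)v · ∂₁v̄)
     = div_g[ 4τ Re(∂₁v̄ · ∇_g v) − 2τ(∇_g φ)|∇_g v|²_g + 2τ³(∇_g φ)|v|² ],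
   stated in local coordinates (x₁ = x 0) for a metric matrix field of product form. -/

noncomputable section
open Complex

abbrev Eu (n : ℕ) := EuclideanSpace ℝ (Fin n)

/-- Partial derivative of a complex-valued function. -/
def pdC (n : ℕ) (i : Fin n) (f : Eu n → ℂ) (x : Eu n) : ℂ :=
  fderiv ℝ f x (EuclideanSpace.single i 1)

/-- Partial derivative of a real-valued function. -/
def pd (n : ℕ) (i : Fin n) (f : Eu n → ℝ) (x : Eu n) : ℝ :=
  fderiv ℝ f x (EuclideanSpace.single i 1)

section helpers
variable {n : ℕ}

lemma contDiff_pdC {v : Eu n → ℂ} (hv : ContDiff ℝ (⊤ : ℕ∞) v) (i : Fin n) :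
    ContDiff ℝ 1 (pdC n i v) := by
  have h : ContDiff ℝ 1 (fderiv ℝ v) := hv.fderiv_right (WithTop.coe_le_coe.mpr le_top)
  exact h.clm_apply contDiff_const

lemma pdC_mul {f h : Eu n → ℂ} {x : Eu n} (i : Fin n)
    (hf : DifferentiableAt ℝ f x) (hh : DifferentiableAt ℝ h x) :
    pdC n i (fun y => f y * h y) x = pdC n i f x * h x + f x * pdC n i h x := by
  unfold pdC
  rw [fderiv_fun_mul hf hh]
  simp only [ContinuousLinearMap.add_apply, ContinuousLinearMap.smul_apply, smul_eq_mul]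
  ring

lemma pdC_sum {ι : Type*} {x : Eu n} (s : Finset ι) (f : ι → Eu n → ℂ) (i : Fin n)
    (h : ∀ j ∈ s, DifferentiableAt ℝ (f j) x) :
    pdC n i (fun y => ∑ j ∈ s, f j y) x = ∑ j ∈ s, pdC n i (f j) x := by
  unfold pdC
  rw [fderiv_fun_sum h]
  simp

lemma pd_add {f h : Eu n → ℝ} {x : Eu n} (i : Fin n)
    (hf : DifferentiableAt ℝ f x) (hh : DifferentiableAt ℝ h x) :
    pd n i (fun y => f y + h y) x = pd n i f x + pd n i h x := by
  unfold pd
  rw [fderiv_fun_add hf hh]; simp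

lemma pd_mul {f h : Eu n → ℝ} {x : Eu n} (i : Fin n)
    (hf : DifferentiableAt ℝ f x) (hh : DifferentiableAt ℝ h x) :
    pd n i (fun y => f y * h y) x = pd n i f x * h x + f x * pd n i h x := by
  unfold pd
  rw [fderiv_fun_mul hf hh]
  simp only [ContinuousLinearMap.add_apply, ContinuousLinearMap.smul_apply, smul_eq_mul]
  ring

lemma pd_const_mul {f : Eu n → ℝ} {x : Eu n} (i : Fin n) (c : ℝ)
    (hf : DifferentiableAt ℝ f x) :
    pd n i (fun y => c * f y) x = c * pd n i f x := by
  unfold pd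
  rw [fderiv_const_mul hf]
  simp

lemma pdC_conj {f : Eu n → ℂ} {x : Eu n} (i : Fin n) (hf : DifferentiableAt ℝ f x) :
    pdC n i (fun y => (starRingEnd ℂ) (f y)) x = (starRingEnd ℂ) (pdC n i f x) := by
  unfold pdC
  have : (fun y => (starRingEnd ℂ) (f y)) = (Complex.conjCLE : ℂ →L[ℝ] ℂ) ∘ f := rfl
  rw [this, fderiv_comp x ((Complex.conjCLE : ℂ →L[ℝ] ℂ)).differentiableAt hf,
    ContinuousLinearMap.fderiv]
  simp

lemma pdC_ofReal {f : Eu n → ℝ} {x : Eu n} (i : Fin n) (hf : DifferentiableAt ℝ f x) :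
    pdC n i (fun y => ((f y : ℝ) : ℂ)) x = ((pd n i f x : ℝ) : ℂ) := by
  unfold pdC pd
  have : (fun y => ((f y : ℝ) : ℂ)) = (Complex.ofRealCLM : ℝ →L[ℝ] ℂ) ∘ f := rfl
  rw [this, fderiv_comp x (Complex.ofRealCLM).differentiableAt hf,
    ContinuousLinearMap.fderiv]
  simp

lemma pd_re {F : Eu n → ℂ} {x : Eu n} (i : Fin n) (hF : DifferentiableAt ℝ F x) :
    pd n i (fun y => (F y).re) x = (pdC n i F x).re := by
  unfold pd pdC
  have : (fun y => (F y).re) = (Complex.reCLM : ℂ →L[ℝ] ℝ) ∘ F := rfl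
  rw [this, fderiv_comp x (Complex.reCLM).differentiableAt hF,
    ContinuousLinearMap.fderiv]
  simp

end helpers
section helpers2
variable {n : ℕ}

lemma single_eq_smul (i : Fin n) (t : ℝ) :
    EuclideanSpace.single i t = t • EuclideanSpace.single i (1:ℝ) := by
  ext j
  simp [EuclideanSpace.single_apply]

lemma pd_inv0 {f : Eu n → ℝ} {x : Eu n} {i0 : Fin n}
    (hf : DifferentiableAt ℝ f x)
    (hinv : ∀ (y : Eu n) (t : ℝ), f (y + EuclideanSpace.single i0 t) = f y) :
    pd n i0 f x = 0 := by
  set e := EuclideanSpace.single i0 (1:ℝ)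
  have hc : HasDerivAt (fun t : ℝ => x + t • e) e 0 := by
    simpa using ((hasDerivAt_id (0:ℝ)).smul_const e).const_add x
  have hx' : HasFDerivAt f (fderiv ℝ f x) ((fun t : ℝ => x + t • e) 0) := by
    simpa using hf.hasFDerivAt
  have hcomp : HasDerivAt (fun t : ℝ => f (x + t • e)) (fderiv ℝ f x e) 0 := by
    exact hx'.comp_hasDerivAt 0 hc
  have hconst : (fun t : ℝ => f (x + t • e)) = fun _ => f x := by
    funext t
    rw [← single_eq_smul i0 t, hinv]
  rw [hconst] at hcomp
  have := hcomp.unique (hasDerivAt_const 0 (f x))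
  simpa [pd] using this

lemma pdC_swap {v : Eu n → ℂ} (hv : ContDiff ℝ (⊤ : ℕ∞) v) (i j : Fin n) (x : Eu n) :
    pdC n i (fun y => pdC n j v y) x = pdC n j (fun y => pdC n i v y) x := by
  have hsymm : IsSymmSndFDerivAt ℝ v x :=
    (hv.contDiffAt).isSymmSndFDerivAt (by rw [minSmoothness_of_isRCLikeNormedField]; exact WithTop.coe_le_coe.mpr le_top)
  have hfd : DifferentiableAt ℝ (fderiv ℝ v) x :=
    (hv.fderiv_right (m := 1) (WithTop.coe_le_coe.mpr le_top)).differentiable one_ne_zero x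
  have key : ∀ a b : Fin n,
      pdC n a (fun y => pdC n b v y) x
        = fderiv ℝ (fderiv ℝ v) x (EuclideanSpace.single a 1) (EuclideanSpace.single b 1) := by
    intro a b
    unfold pdC
    rw [fderiv_clm_apply hfd (differentiableAt_const _)]
    simp
  rw [key i j, key j i]
  exact hsymm _ _

lemma contDiff_finset_prod {ι : Type*} [DecidableEq ι] (s : Finset ι) (f : ι → Eu n → ℝ)
    (h : ∀ i ∈ s, ContDiff ℝ (⊤ : ℕ∞) (f i)) :
    ContDiff ℝ (⊤ : ℕ∞) (fun y => ∏ i ∈ s, f i y) := by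
  induction s using Finset.induction_on with
  | empty => simpa using contDiff_const
  | insert _ _ hnotin ih =>
    rename_i a s'
    simp only [Finset.prod_insert hnotin]
    exact (h a (Finset.mem_insert_self a s')).mul
      (ih fun i hi => h i (Finset.mem_insert_of_mem hi))

lemma contDiff_matrix_det {m : ℕ} {A : Eu n → Matrix (Fin m) (Fin m) ℝ}
    (h : ∀ i j, ContDiff ℝ (⊤ : ℕ∞) (fun y => A y i j)) :
    ContDiff ℝ (⊤ : ℕ∞) (fun y => (A y).det) := by
  have : (fun y => (A y).det)
      = fun y => ∑ σ : Equiv.Perm (Fin m), (Equiv.Perm.sign σ : ℝ) * ∏ i, A y (σ i) i := by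
    funext y
    rw [Matrix.det_apply]
    congr 1
    funext σ
    simp [Units.smul_def, zsmul_eq_mul]
  rw [this]
  apply ContDiff.sum
  intro σ _
  exact contDiff_const.mul (contDiff_finset_prod _ _ fun i _ => h (σ i) i)

end helpers2
section helpers3
variable {n : ℕ}

lemma contDiff_adjugate {m : ℕ} {A : Eu n → Matrix (Fin m) (Fin m) ℝ}
    (h : ∀ i j, ContDiff ℝ (⊤ : ℕ∞) (fun y => A y i j)) (i j : Fin m) :
    ContDiff ℝ (⊤ : ℕ∞) (fun y => (A y).adjugate i j) := by
  have heq : (fun y => (A y).adjugate i j)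
      = fun y => ((A y).updateRow j (Pi.single i 1)).det := by
    funext y; rw [Matrix.adjugate_apply]
  rw [heq]
  apply contDiff_matrix_det
  intro k l
  rcases eq_or_ne k j with hk | hk
  · simpa [Matrix.updateRow_apply, hk] using contDiff_const
  · simpa [Matrix.updateRow_apply, hk] using h k l

lemma contDiff_inv_entry {A : Eu n → Matrix (Fin n) (Fin n) ℝ}
    (h : ∀ i j, ContDiff ℝ (⊤ : ℕ∞) (fun y => A y i j)) (hd : ∀ y, (A y).det ≠ 0) (i j : Fin n) :
    ContDiff ℝ (⊤ : ℕ∞) (fun y => (A y)⁻¹ i j) := by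
  have heq : (fun y => (A y)⁻¹ i j)
      = fun y => ((A y).det)⁻¹ * (A y).adjugate i j := by
    funext y
    rw [Matrix.inv_def, Ring.inverse_eq_inv', Matrix.smul_apply, smul_eq_mul]
  rw [heq]
  exact ((contDiff_matrix_det h).inv hd).mul (contDiff_adjugate h i j)

end helpers3

/-- Riemannian gradient of a complex function: (∇_g v)^i = g^{ij} ∂_j v. -/
def gradC (n : ℕ) (g : Eu n → Matrix (Fin n) (Fin n) ℝ) (v : Eu n → ℂ) (x : Eu n) :
    Fin n → ℂ := fun i => ∑ j, ((g x)⁻¹ i j : ℝ) * pdC n j v x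

/-- Riemannian divergence of a real vector field: div_g X = |g|^{-1/2}∂_i(|g|^{1/2}X^i). -/
def divg (n : ℕ) (g : Eu n → Matrix (Fin n) (Fin n) ℝ) (X : Eu n → Fin n → ℝ) (x : Eu n) : ℝ :=
  (Real.sqrt (g x).det)⁻¹ * ∑ i, pd n i (fun y => Real.sqrt (g y).det * X y i) x

/-- Riemannian divergence of a complex vector field. -/
def divgC (n : ℕ) (g : Eu n → Matrix (Fin n) (Fin n) ℝ) (X : Eu n → Fin n → ℂ) (x : Eu n) : ℂ :=
  ((Real.sqrt (g x).det)⁻¹ : ℝ) * ∑ i, pdC n i (fun y => (Real.sqrt (g y).det : ℝ) * X y i) x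

/-- Laplace–Beltrami operator Δ_g v = div_g(∇_g v). -/
def lapC (n : ℕ) (g : Eu n → Matrix (Fin n) (Fin n) ℝ) (v : Eu n → ℂ) (x : Eu n) : ℂ :=
  divgC n g (gradC n g v) x

/-- |∇_g v|²_g = g^{ij} ∂ᵢv ∂ⱼv̄ (a real quantity). -/
def gradNormSq (n : ℕ) (g : Eu n → Matrix (Fin n) (Fin n) ℝ) (v : Eu n → ℂ) (x : Eu n) : ℝ :=
  (∑ i, ∑ j, ((g x)⁻¹ i j : ℝ) * (pdC n i v x * (starRingEnd ℂ) (pdC n j v x))).re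

theorem stmt3 (n : ℕ) (hn : 3 ≤ n) (h0 : (0 : ℕ) < n)
    (g : Eu n → Matrix (Fin n) (Fin n) ℝ)
    (hg : ∀ i j, ContDiff ℝ (⊤ : ℕ∞) (fun x => g x i j))
    (hgpos : ∀ x, (g x).PosDef)
    -- product structure g = e ⊕ g₀ in the coordinates (x₁ = x ⟨0⟩):
    (hprod1 : ∀ x, g x ⟨0, h0⟩ ⟨0, h0⟩ = 1)
    (hprod2 : ∀ x (i : Fin n), i ≠ ⟨0, h0⟩ → g x i ⟨0, h0⟩ = 0 ∧ g x ⟨0, h0⟩ i = 0)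
    (hprod3 : ∀ (x : Eu n) (t : ℝ), g (x + EuclideanSpace.single ⟨0, h0⟩ t) = g x)
    (v : Eu n → ℂ) (hv : ContDiff ℝ (⊤ : ℕ∞) v) (τ : ℝ) :
    ∀ x : Eu n,
      4 * τ * ((lapC n g v x + (τ:ℂ)^2 * v x) * (starRingEnd ℂ) (pdC n ⟨0, h0⟩ v x)).re
      = divg n g
          (fun y i =>
            4 * τ * ((starRingEnd ℂ) (pdC n ⟨0, h0⟩ v y) * gradC n g v y i).re
            - 2 * τ * ((g y)⁻¹ i ⟨0, h0⟩) * gradNormSq n g v y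
            + 2 * τ^3 * ((g y)⁻¹ i ⟨0, h0⟩) * ‖v y‖ ^ 2) x := by
  intro x
  set i0 : Fin n := ⟨0, h0⟩ with hi0def
  -- basic smoothness/positivity facts
  have hdet_cd : ContDiff ℝ (⊤ : ℕ∞) (fun y => (g y).det) := contDiff_matrix_det hg
  have hdet_pos : ∀ y, 0 < (g y).det := fun y => (hgpos y).det_pos
  have hG_cd : ∀ i j, ContDiff ℝ (⊤ : ℕ∞) (fun y => (g y)⁻¹ i j) :=
    fun i j => contDiff_inv_entry hg (fun y => (hdet_pos y).ne') i j
  set s : Eu n → ℝ := fun y => Real.sqrt (g y).det with hs_def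
  have hs_pos : ∀ y, 0 < s y := fun y => Real.sqrt_pos.2 (hdet_pos y)
  have hs_cd : ContDiff ℝ 1 s := by
    rw [contDiff_iff_contDiffAt]
    intro y
    exact (Real.contDiffAt_sqrt (hdet_pos y).ne').comp y (hdet_cd.contDiffAt.of_le (by simp))
  have hsd : ∀ y, DifferentiableAt ℝ s y := fun y => (hs_cd.differentiable one_ne_zero) y
  have hGd : ∀ i j y, DifferentiableAt ℝ (fun z => (g z)⁻¹ i j) y :=
    fun i j y => ((hG_cd i j).differentiable (by simp)) y
  have hpdd : ∀ (i : Fin n) y, DifferentiableAt ℝ (pdC n i v) y :=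
    fun i y => ((contDiff_pdC hv i).differentiable one_ne_zero) y
  have hvd : ∀ y, DifferentiableAt ℝ v y := fun y => (hv.differentiable (by simp)) y
  have hconjd : ∀ (f : Eu n → ℂ) y, DifferentiableAt ℝ f y →
      DifferentiableAt ℝ (fun z => (starRingEnd ℂ) (f z)) y := by
    intro f y hf
    exact ((Complex.conjCLE : ℂ →L[ℝ] ℂ).differentiableAt.comp y hf :)
  have hRe : ∀ (f : Eu n → ℂ) y, DifferentiableAt ℝ f y →
      DifferentiableAt ℝ (fun z => (f z).re) y := by
    intro f y hf
    exact ((Complex.reCLM : ℂ →L[ℝ] ℝ).differentiableAt.comp y hf :)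
  have hofReal : ∀ (f : Eu n → ℝ) y, DifferentiableAt ℝ f y →
      DifferentiableAt ℝ (fun z => ((f z : ℝ) : ℂ)) y := by
    intro f y hf
    exact ((Complex.ofRealCLM : ℝ →L[ℝ] ℂ).differentiableAt.comp y hf :)
  have hGCd : ∀ (i j : Fin n) y, DifferentiableAt ℝ (fun z => (((g z)⁻¹ i j : ℝ) : ℂ)) y :=
    fun i j y => hofReal _ y (hGd i j y)
  have hsCd : ∀ y, DifferentiableAt ℝ (fun z => ((s z : ℝ) : ℂ)) y :=
    fun y => hofReal _ y (hsd y)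
  have hgradd : ∀ (i : Fin n) y, DifferentiableAt ℝ (fun z => gradC n g v z i) y := by
    intro i y
    have : (fun z => gradC n g v z i)
        = fun z => ∑ j, (((g z)⁻¹ i j : ℝ) : ℂ) * pdC n j v z := rfl
    rw [this]
    exact DifferentiableAt.fun_sum (fun j _ => (hGCd i j y).mul (hpdd j y))
  -- invariance in the x₁ direction
  have hs_inv : pd n i0 s x = 0 := by
    apply pd_inv0 (hsd x)
    intro y t
    simp only [hs_def]
    rw [hprod3 y t]
  have hG_inv : ∀ i j : Fin n, pd n i0 (fun z => (g z)⁻¹ i j) x = 0 := by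
    intro i j
    apply pd_inv0 (hGd i j x)
    intro y t
    show (g (y + EuclideanSpace.single i0 t))⁻¹ i j = (g y)⁻¹ i j
    rw [hprod3 y t]
  -- the delta structure of the inverse metric
  have hGdelta : ∀ (y : Eu n) (i : Fin n), (g y)⁻¹ i i0 = if i = i0 then 1 else 0 := by
    intro y i
    have hu : IsUnit (g y).det := (hdet_pos y).ne'.isUnit
    have h1 : (g y)⁻¹ * g y = 1 := Matrix.nonsing_inv_mul _ hu
    have hcol : ∀ k : Fin n, g y k i0 = if k = i0 then 1 else 0 := by
      intro k
      rcases eq_or_ne k i0 with hk | hk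
      · simp [hk, hprod1 y]
      · simp [hk, (hprod2 y k hk).1]
    have h2 := congrFun (congrFun h1 i) i0
    rw [Matrix.mul_apply] at h2
    simp only [hcol, mul_ite, mul_one, mul_zero] at h2
    rw [Finset.sum_ite_eq' Finset.univ i0 (fun k => (g y)⁻¹ i k)] at h2
    simp only [Finset.mem_univ, if_true] at h2
    rw [h2, Matrix.one_apply]
  have hGsymm : ∀ (y : Eu n) (i j : Fin n), (g y)⁻¹ i j = (g y)⁻¹ j i := by
    intro y i j
    have h := ((hgpos y).isHermitian.inv).apply j i
    simpa using h
  -- atoms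
  have hre2 : ∀ z w : ℂ, (z * (starRingEnd ℂ) w).re = (w * (starRingEnd ℂ) z).re := by
    intro z w
    have h : w * (starRingEnd ℂ) z = (starRingEnd ℂ) (z * (starRingEnd ℂ) w) := by
      rw [map_mul]
      simp [mul_comm]
    rw [h, Complex.conj_re]
  have hswap : ∀ i : Fin n, pdC n i0 (pdC n i v) x = pdC n i (pdC n i0 v) x :=
    fun i => pdC_swap hv i0 i x
  have hnormv : (fun y => ‖v y‖^2) = fun y => (v y * (starRingEnd ℂ) (v y)).re := by
    funext y
    rw [Complex.mul_conj, Complex.ofReal_re, Complex.normSq_eq_norm_sq]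
  have hnvd : ∀ y, DifferentiableAt ℝ (fun z => ‖v z‖^2) y := by
    intro y
    rw [hnormv]
    exact hRe _ y ((hvd y).mul (hconjd v y (hvd y)))
  have hpdnv : pd n i0 (fun y => ‖v y‖^2) x = 2 * (v x * (starRingEnd ℂ) (pdC n i0 v x)).re := by
    rw [hnormv, pd_re _ ((hvd x).fun_mul (hconjd v x (hvd x))), pdC_mul i0 (hvd x) (hconjd v x (hvd x)),
      pdC_conj i0 (hvd x), Complex.add_re]
    rw [hre2 (pdC n i0 v x) (v x)]
    ring
  -- derivative of the gradient norm squared in the x₁ direction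
  have hterm_d : ∀ (i j : Fin n) (y : Eu n), DifferentiableAt ℝ
      (fun z => (((g z)⁻¹ i j : ℝ) : ℂ) * (pdC n i v z * (starRingEnd ℂ) (pdC n j v z))) y :=
    fun i j y => (hGCd i j y).mul ((hpdd i y).mul (hconjd _ y (hpdd j y)))
  have hinner_d : ∀ (i : Fin n) (y : Eu n), DifferentiableAt ℝ
      (fun z => ∑ j, (((g z)⁻¹ i j : ℝ) : ℂ) * (pdC n i v z * (starRingEnd ℂ) (pdC n j v z))) y :=
    fun i y => DifferentiableAt.fun_sum (fun j _ => hterm_d i j y)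
  have hMd : ∀ y, DifferentiableAt ℝ
      (fun z => ∑ i, ∑ j, (((g z)⁻¹ i j : ℝ) : ℂ) * (pdC n i v z * (starRingEnd ℂ) (pdC n j v z))) y :=
    fun y => DifferentiableAt.fun_sum (fun i _ => hinner_d i y)
  have hNd : ∀ y, DifferentiableAt ℝ (gradNormSq n g v) y := by
    intro y
    exact hRe _ y (hMd y)
  have hpdterm : ∀ i j : Fin n, pdC n i0
      (fun z => (((g z)⁻¹ i j : ℝ) : ℂ) * (pdC n i v z * (starRingEnd ℂ) (pdC n j v z))) x
      = (((g x)⁻¹ i j : ℝ) : ℂ) * (pdC n i (pdC n i0 v) x * (starRingEnd ℂ) (pdC n j v x)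
          + pdC n i v x * (starRingEnd ℂ) (pdC n j (pdC n i0 v) x)) := by
    intro i j
    rw [pdC_mul i0 (hGCd i j x) ((hpdd i x).fun_mul (hconjd _ x (hpdd j x))),
      pdC_ofReal i0 (hGd i j x), hG_inv i j,
      pdC_mul i0 (hpdd i x) (hconjd _ x (hpdd j x)),
      pdC_conj i0 (hpdd j x), hswap i, hswap j]
    simp
  have hpdN : pd n i0 (gradNormSq n g v) x
      = 2 * ∑ i, ∑ j, (g x)⁻¹ i j * (pdC n i (pdC n i0 v) x * (starRingEnd ℂ) (pdC n j v x)).re := by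
    have hNdef : gradNormSq n g v = fun z =>
        (∑ i, ∑ j, (((g z)⁻¹ i j : ℝ) : ℂ) * (pdC n i v z * (starRingEnd ℂ) (pdC n j v z))).re := rfl
    rw [hNdef, pd_re _ (hMd x),
      pdC_sum Finset.univ _ i0 (fun i _ => hinner_d i x)]
    have : ∀ i : Fin n, i ∈ Finset.univ → pdC n i0
        (fun z => ∑ j, (((g z)⁻¹ i j : ℝ) : ℂ) * (pdC n i v z * (starRingEnd ℂ) (pdC n j v z))) x
        = ∑ j, (((g x)⁻¹ i j : ℝ) : ℂ) * (pdC n i (pdC n i0 v) x * (starRingEnd ℂ) (pdC n j v x)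
            + pdC n i v x * (starRingEnd ℂ) (pdC n j (pdC n i0 v) x)) := by
      intro i _
      rw [pdC_sum Finset.univ _ i0 (fun j _ => hterm_d i j x)]
      exact Finset.sum_congr rfl (fun j _ => hpdterm i j)
    rw [Finset.sum_congr rfl this]
    rw [Complex.re_sum]
    have hrw : ∀ i : Fin n, (∑ j, (((g x)⁻¹ i j : ℝ) : ℂ) *
        (pdC n i (pdC n i0 v) x * (starRingEnd ℂ) (pdC n j v x)
          + pdC n i v x * (starRingEnd ℂ) (pdC n j (pdC n i0 v) x))).re
        = ∑ j, (g x)⁻¹ i j * ((pdC n i (pdC n i0 v) x * (starRingEnd ℂ) (pdC n j v x)).re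
            + (pdC n i v x * (starRingEnd ℂ) (pdC n j (pdC n i0 v) x)).re) := by
      intro i
      rw [Complex.re_sum]
      exact Finset.sum_congr rfl (fun j _ => by rw [Complex.re_ofReal_mul, Complex.add_re])
    rw [Finset.sum_congr rfl (fun i _ => hrw i)]
    -- split the double sum and symmetrize the second half
    have hsplit : ∑ i, ∑ j, (g x)⁻¹ i j * ((pdC n i (pdC n i0 v) x * (starRingEnd ℂ) (pdC n j v x)).re
            + (pdC n i v x * (starRingEnd ℂ) (pdC n j (pdC n i0 v) x)).re)
        = (∑ i, ∑ j, (g x)⁻¹ i j * (pdC n i (pdC n i0 v) x * (starRingEnd ℂ) (pdC n j v x)).re)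
          + ∑ i, ∑ j, (g x)⁻¹ i j * (pdC n i v x * (starRingEnd ℂ) (pdC n j (pdC n i0 v) x)).re := by
      rw [← Finset.sum_add_distrib]
      apply Finset.sum_congr rfl
      intro i _
      rw [← Finset.sum_add_distrib]
      exact Finset.sum_congr rfl (fun j _ => by ring)
    rw [hsplit]
    have hsym : ∑ i, ∑ j, (g x)⁻¹ i j * (pdC n i v x * (starRingEnd ℂ) (pdC n j (pdC n i0 v) x)).re
        = ∑ i, ∑ j, (g x)⁻¹ i j * (pdC n i (pdC n i0 v) x * (starRingEnd ℂ) (pdC n j v x)).re := by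
      rw [Finset.sum_comm]
      apply Finset.sum_congr rfl
      intro i _
      apply Finset.sum_congr rfl
      intro j _
      rw [hGsymm x j i, hre2 (pdC n j v x) (pdC n i (pdC n i0 v) x)]
    rw [hsym]
    ring
  -- ∑ᵢ ∂ᵢ(√det · (∇v)ⁱ) = √det · Δv
  have hWsum : ((Real.sqrt (g x).det : ℝ) : ℂ) * lapC n g v x
      = ∑ i, pdC n i (fun y => ((Real.sqrt (g y).det : ℝ) : ℂ) * gradC n g v y i) x := by
    show ((Real.sqrt (g x).det : ℝ) : ℂ) * divgC n g (gradC n g v) x = _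
    rw [divgC, ← mul_assoc]
    have h1 : ((Real.sqrt (g x).det : ℝ) : ℂ) * (((Real.sqrt (g x).det)⁻¹ : ℝ) : ℂ) = 1 := by
      rw [← Complex.ofReal_mul, mul_inv_cancel₀ (hs_pos x).ne']
      simp
    rw [h1, one_mul]
  have hs_inv' : pd n i0 (fun y => Real.sqrt (g y).det) x = 0 := hs_inv
  -- differentiability of the flux pieces
  have hWd : ∀ (i : Fin n) (y : Eu n), DifferentiableAt ℝ
      (fun z => ((Real.sqrt (g z).det : ℝ) : ℂ) * gradC n g v z i) y :=
    fun i y => (hofReal _ y (hsd y)).mul (hgradd i y)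
  have hFinner_d : ∀ (i : Fin n) (y : Eu n), DifferentiableAt ℝ
      (fun z => ((starRingEnd ℂ) (pdC n i0 v z)
        * (((Real.sqrt (g z).det : ℝ) : ℂ) * gradC n g v z i)).re) y :=
    fun i y => hRe _ y ((hconjd _ y (hpdd i0 y)).mul (hWd i y))
  have hFd : ∀ (i : Fin n) (y : Eu n), DifferentiableAt ℝ
      (fun z => 4 * τ * ((starRingEnd ℂ) (pdC n i0 v z)
        * (((Real.sqrt (g z).det : ℝ) : ℂ) * gradC n g v z i)).re) y :=
    fun i y => (hFinner_d i y).const_mul _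
  have hPd : ∀ y : Eu n, DifferentiableAt ℝ
      (fun z => -(2*τ) * (Real.sqrt (g z).det * gradNormSq n g v z)
        + 2*τ^3 * (Real.sqrt (g z).det * ‖v z‖^2)) y :=
    fun y => (((hsd y).mul (hNd y)).const_mul _).add (((hsd y).mul (hnvd y)).const_mul _)
  -- decompose each flux component
  have hterm : ∀ i : Fin n,
      pd n i (fun y => Real.sqrt (g y).det *
        (4 * τ * ((starRingEnd ℂ) (pdC n i0 v y) * gradC n g v y i).re
          - 2 * τ * ((g y)⁻¹ i i0) * gradNormSq n g v y
          + 2 * τ^3 * ((g y)⁻¹ i i0) * ‖v y‖ ^ 2)) x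
      = pd n i (fun z => 4 * τ * ((starRingEnd ℂ) (pdC n i0 v z)
          * (((Real.sqrt (g z).det : ℝ) : ℂ) * gradC n g v z i)).re) x
        + (if i = i0 then pd n i0 (fun z => -(2*τ) * (Real.sqrt (g z).det * gradNormSq n g v z)
            + 2*τ^3 * (Real.sqrt (g z).det * ‖v z‖^2)) x else 0) := by
    intro i
    have hmove : ∀ y : Eu n, ((starRingEnd ℂ) (pdC n i0 v y)
        * (((Real.sqrt (g y).det : ℝ) : ℂ) * gradC n g v y i)).re
        = Real.sqrt (g y).det * ((starRingEnd ℂ) (pdC n i0 v y) * gradC n g v y i).re := by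
      intro y
      rw [show (starRingEnd ℂ) (pdC n i0 v y) * (((Real.sqrt (g y).det : ℝ) : ℂ) * gradC n g v y i)
          = ((Real.sqrt (g y).det : ℝ) : ℂ) * ((starRingEnd ℂ) (pdC n i0 v y) * gradC n g v y i) by
            ring,
        Complex.re_ofReal_mul]
    rcases eq_or_ne i i0 with hi | hi
    · subst hi
      rw [if_pos rfl]
      have hfun : (fun y => Real.sqrt (g y).det *
          (4 * τ * ((starRingEnd ℂ) (pdC n i0 v y) * gradC n g v y i0).re
            - 2 * τ * ((g y)⁻¹ i0 i0) * gradNormSq n g v y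
            + 2 * τ^3 * ((g y)⁻¹ i0 i0) * ‖v y‖ ^ 2))
          = fun y => (4 * τ * ((starRingEnd ℂ) (pdC n i0 v y)
              * (((Real.sqrt (g y).det : ℝ) : ℂ) * gradC n g v y i0)).re)
            + (-(2*τ) * (Real.sqrt (g y).det * gradNormSq n g v y)
              + 2*τ^3 * (Real.sqrt (g y).det * ‖v y‖^2)) := by
        funext y
        rw [hGdelta y i0, if_pos rfl, hmove y]
        ring
      rw [hfun, pd_add i0 (hFd i0 x) (hPd x)]
    · rw [if_neg hi, add_zero]
      have hfun : (fun y => Real.sqrt (g y).det *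
          (4 * τ * ((starRingEnd ℂ) (pdC n i0 v y) * gradC n g v y i).re
            - 2 * τ * ((g y)⁻¹ i i0) * gradNormSq n g v y
            + 2 * τ^3 * ((g y)⁻¹ i i0) * ‖v y‖ ^ 2))
          = fun y => 4 * τ * ((starRingEnd ℂ) (pdC n i0 v y)
              * (((Real.sqrt (g y).det : ℝ) : ℂ) * gradC n g v y i)).re := by
        funext y
        rw [hGdelta y i, if_neg hi, hmove y]
        ring
      rw [hfun]
  -- derivative of each main flux component
  have hpdF : ∀ i : Fin n,
      pd n i (fun z => 4 * τ * ((starRingEnd ℂ) (pdC n i0 v z)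
          * (((Real.sqrt (g z).det : ℝ) : ℂ) * gradC n g v z i)).re) x
      = 4 * τ * ((starRingEnd ℂ) (pdC n i (pdC n i0 v) x)
            * (((Real.sqrt (g x).det : ℝ) : ℂ) * gradC n g v x i)
          + (starRingEnd ℂ) (pdC n i0 v x)
            * pdC n i (fun z => ((Real.sqrt (g z).det : ℝ) : ℂ) * gradC n g v z i) x).re := by
    intro i
    rw [pd_const_mul i _ (hFinner_d i x),
      pd_re _ ((hconjd _ x (hpdd i0 x)).fun_mul (hWd i x)),
      pdC_mul i (hconjd _ x (hpdd i0 x)) (hWd i x),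
      pdC_conj i (hpdd i0 x)]
  -- derivative of the correction term
  have hpdP : pd n i0 (fun z => -(2*τ) * (Real.sqrt (g z).det * gradNormSq n g v z)
        + 2*τ^3 * (Real.sqrt (g z).det * ‖v z‖^2)) x
      = -(2*τ) * (Real.sqrt (g x).det
          * (2 * ∑ i, ∑ j, (g x)⁻¹ i j * (pdC n i (pdC n i0 v) x * (starRingEnd ℂ) (pdC n j v x)).re))
        + 2*τ^3 * (Real.sqrt (g x).det * (2 * (v x * (starRingEnd ℂ) (pdC n i0 v x)).re)) := by
    rw [pd_add i0 (((hsd x).fun_mul (hNd x)).const_mul _) (((hsd x).fun_mul (hnvd x)).const_mul _),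
      pd_const_mul i0 _ ((hsd x).fun_mul (hNd x)), pd_const_mul i0 _ ((hsd x).fun_mul (hnvd x)),
      pd_mul i0 (hsd x) (hNd x), pd_mul i0 (hsd x) (hnvd x), hs_inv', hpdN, hpdnv]
    ring
  -- assemble everything
  have hsq : Real.sqrt (g x).det ≠ 0 := (hs_pos x).ne'
  have hST : (∑ i, ∑ j, (g x)⁻¹ i j * ((starRingEnd ℂ) (pdC n i (pdC n i0 v) x) * pdC n j v x).re)
      = ∑ i, ∑ j, (g x)⁻¹ i j
          * (pdC n i (pdC n i0 v) x * (starRingEnd ℂ) (pdC n j v x)).re := by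
    apply Finset.sum_congr rfl
    intro i _
    apply Finset.sum_congr rfl
    intro j _
    rw [mul_comm ((starRingEnd ℂ) (pdC n i (pdC n i0 v) x)) (pdC n j v x),
      hre2 (pdC n j v x) (pdC n i (pdC n i0 v) x)]
  have hsumF : (∑ i, 4 * τ * ((starRingEnd ℂ) (pdC n i (pdC n i0 v) x)
            * (((Real.sqrt (g x).det : ℝ) : ℂ) * gradC n g v x i)
          + (starRingEnd ℂ) (pdC n i0 v x)
            * pdC n i (fun z => ((Real.sqrt (g z).det : ℝ) : ℂ) * gradC n g v z i) x).re)
      = 4 * τ * (Real.sqrt (g x).det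
          * ((∑ i, ∑ j, (g x)⁻¹ i j
              * (pdC n i (pdC n i0 v) x * (starRingEnd ℂ) (pdC n j v x)).re)
            + ((starRingEnd ℂ) (pdC n i0 v x) * lapC n g v x).re)) := by
    rw [← Finset.mul_sum, ← Complex.re_sum, Finset.sum_add_distrib, ← Finset.mul_sum, ← hWsum]
    have h1 : (∑ i, (starRingEnd ℂ) (pdC n i (pdC n i0 v) x)
          * (((Real.sqrt (g x).det : ℝ) : ℂ) * gradC n g v x i))
        = ((Real.sqrt (g x).det : ℝ) : ℂ) * ∑ i, ∑ j, (((g x)⁻¹ i j : ℝ) : ℂ)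
            * ((starRingEnd ℂ) (pdC n i (pdC n i0 v) x) * pdC n j v x) := by
      rw [Finset.mul_sum]
      apply Finset.sum_congr rfl
      intro i _
      have hgr : gradC n g v x i = ∑ j, (((g x)⁻¹ i j : ℝ) : ℂ) * pdC n j v x := rfl
      rw [hgr, Finset.mul_sum, Finset.mul_sum, Finset.mul_sum]
      apply Finset.sum_congr rfl
      intro j _
      ring
    have h2 : (starRingEnd ℂ) (pdC n i0 v x) * (((Real.sqrt (g x).det : ℝ) : ℂ) * lapC n g v x)
        = ((Real.sqrt (g x).det : ℝ) : ℂ)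
          * ((starRingEnd ℂ) (pdC n i0 v x) * lapC n g v x) := by ring
    rw [h1, h2, ← mul_add, Complex.re_ofReal_mul, Complex.add_re, Complex.re_sum]
    have h3 : ∀ i : Fin n, (∑ j, (((g x)⁻¹ i j : ℝ) : ℂ)
          * ((starRingEnd ℂ) (pdC n i (pdC n i0 v) x) * pdC n j v x)).re
        = ∑ j, (g x)⁻¹ i j * ((starRingEnd ℂ) (pdC n i (pdC n i0 v) x) * pdC n j v x).re := by
      intro i
      rw [Complex.re_sum]
      exact Finset.sum_congr rfl fun j _ => Complex.re_ofReal_mul _ _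
    rw [Finset.sum_congr rfl (fun i _ => h3 i), hST]
  have hLHS : ((lapC n g v x + (τ:ℂ)^2 * v x) * (starRingEnd ℂ) (pdC n i0 v x)).re
      = ((starRingEnd ℂ) (pdC n i0 v x) * lapC n g v x).re
        + τ^2 * (v x * (starRingEnd ℂ) (pdC n i0 v x)).re := by
    rw [add_mul, Complex.add_re, mul_comm (lapC n g v x)]
    congr 1
    rw [show (τ:ℂ)^2 * v x * (starRingEnd ℂ) (pdC n i0 v x)
        = ((τ^2 : ℝ) : ℂ) * (v x * (starRingEnd ℂ) (pdC n i0 v x)) by push_cast; ring,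
      Complex.re_ofReal_mul]
  simp only [divg]
  rw [Finset.sum_congr rfl (fun i _ => hterm i), Finset.sum_add_distrib]
  simp only [Finset.sum_ite_eq', Finset.mem_univ, if_true]
  rw [Finset.sum_congr rfl (fun i _ => hpdF i), hsumF, hpdP, hLHS]
  field_simp
  ring
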